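/- arXiv:1310.2213 — 4 statements merged into one kernel-verified Lean document; each statement's English description precedes it below -/
import Mathlib

section
/- Suppose v ∈ C¹ and p₁,…,p_m ∈ C⁰ satisfy, for all x ∈ X: ∇v(x)·f(x) + ū·Σᵢ pᵢ(x) ≤ β v(x), pᵢ(x) ≥ ∇v(x)·Gᵢ(x), pᵢ(x) ≥ 0, and v(x) ≥ 1 for x ∈ X_T. Then for any trajectory x(·) of ẋ = f(x) + G(x)u(t) with u(t) ∈ [0,ū]^m and x(t) ∈ X on [0,τ], and x(τ) ∈ X_T, one has v(x(0)) > 0. Hence the region of attraction X₀ is contained in {x : v(x) > 0}. -/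
open Set Real

/-- The region of attraction of the target set `XT` for the input-affine control
system `ẋ = f(x) + G(x)u`, with state constraint `X` and inputs `u(t) ∈ [0, ub]^m`. -/
def ROA {n m : ℕ} (f : EuclideanSpace ℝ (Fin n) → EuclideanSpace ℝ (Fin n))
    (G : EuclideanSpace ℝ (Fin n) → Fin m → EuclideanSpace ℝ (Fin n))
    (ub : ℝ) (X XT : Set (EuclideanSpace ℝ (Fin n))) :
    Set (EuclideanSpace ℝ (Fin n)) :=
  {x₀ | ∃ τ : ℝ, 0 ≤ τ ∧ ∃ u : ℝ → Fin m → ℝ, ∃ x : ℝ → EuclideanSpace ℝ (Fin n),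
    (∀ t ∈ Icc (0:ℝ) τ, HasDerivAt x (f (x t) + ∑ i, u t i • G (x t) i) t) ∧
    (∀ t ∈ Icc (0:ℝ) τ, x t ∈ X ∧ ∀ i, u t i ∈ Icc (0:ℝ) ub) ∧
    x 0 = x₀ ∧ x τ ∈ XT}

/-!
Along an admissible trajectory the certificate gives `d/dt v(x(t)) ≤ β v(x(t))`, since each input
term `uᵢ ∇v·Gᵢ` is bounded by `ū pᵢ`. By Grönwall, `v(x(τ)) ≤ v(x(0)) e^{βτ}`, and `v(x(τ)) ≥ 1`
on the target forces `v(x(0)) > 0`.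
-/

theorem map_add_sum_smul_le {E ι F : Type*} [AddCommGroup E] [Module ℝ E] [Fintype ι]
    [FunLike F E ℝ] [LinearMapClass F ℝ E ℝ] (L : F) {a : E} {b : ι → E} {w p : ι → ℝ}
    {ub c : ℝ} (hw : ∀ i, w i ∈ Icc 0 ub) (hb : ∀ i, L (b i) ≤ p i) (hp : ∀ i, 0 ≤ p i)
    (ha : L a + ub * ∑ i, p i ≤ c) :
    L (a + ∑ i, w i • b i) ≤ c :=
  calc L (a + ∑ i, w i • b i) = L a + ∑ i, w i * L (b i) := by
        simp only [map_add, map_sum, map_smul, smul_eq_mul]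
    _ ≤ L a + ∑ i, ub * p i := by
        gcongr L a + ?_
        exact Finset.sum_le_sum fun i _ => (mul_le_mul_of_nonneg_left (hb i) (hw i).1).trans
          (mul_le_mul_of_nonneg_right (hw i).2 (hp i))
    _ = L a + ub * ∑ i, p i := by rw [Finset.mul_sum]
    _ ≤ c := ha

theorem le_mul_exp_of_hasDerivAt_le_mul {g g' : ℝ → ℝ} {K a b : ℝ} (hab : a ≤ b)
    (hg : ∀ t ∈ Icc a b, HasDerivAt g (g' t) t) (bound : ∀ t ∈ Ico a b, g' t ≤ K * g t) :
    g b ≤ g a * exp (K * (b - a)) := by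
  have hcont : ContinuousOn g (Icc a b) := fun t ht => (hg t ht).continuousAt.continuousWithinAt
  have := le_gronwallBound_of_liminf_deriv_right_le (ε := 0) hcont
    (fun t ht _ hr => (hg t (Ico_subset_Icc_self ht)).hasDerivWithinAt.liminf_right_slope_le hr)
    le_rfl (by simpa using bound) b (right_mem_Icc.2 hab)
  rwa [gronwallBound_ε0] at this

theorem outer_approximation_certificate_general
    {n m : ℕ} (f : EuclideanSpace ℝ (Fin n) → EuclideanSpace ℝ (Fin n))
    (G : EuclideanSpace ℝ (Fin n) → Fin m → EuclideanSpace ℝ (Fin n))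
    (ub : ℝ)
    (X XT : Set (EuclideanSpace ℝ (Fin n)))
    (v : EuclideanSpace ℝ (Fin n) → ℝ) (p : Fin m → EuclideanSpace ℝ (Fin n) → ℝ)
    (β : ℝ)
    (hv : ContDiff ℝ 1 v)
    (hcert1 : ∀ y ∈ X, fderiv ℝ v y (f y) + ub * ∑ i, p i y ≤ β * v y)
    (hcert2 : ∀ y ∈ X, ∀ i, fderiv ℝ v y (G y i) ≤ p i y)
    (hcert3 : ∀ y ∈ X, ∀ i, 0 ≤ p i y)
    (hcert4 : ∀ y ∈ XT, 1 ≤ v y) :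
    ROA f G ub X XT ⊆ {y | 0 < v y} := by
  rintro _ ⟨τ, hτ, u, x, hx, hadm, rfl, hxτ⟩
  have hvx : ∀ t ∈ Icc 0 τ,
      HasDerivAt (v ∘ x) (fderiv ℝ v (x t) (f (x t) + ∑ i, u t i • G (x t) i)) t :=
    fun t ht => ((hv.differentiable one_ne_zero) (x t)).hasFDerivAt.comp_hasDerivAt t (hx t ht)
  have hgrowth : v (x τ) ≤ v (x 0) * exp (β * (τ - 0)) :=
    le_mul_exp_of_hasDerivAt_le_mul hτ hvx fun t ht => by
      obtain ⟨hxX, hu⟩ := hadm t (Ico_subset_Icc_self ht)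
      exact map_add_sum_smul_le _ hu (hcert2 _ hxX) (hcert3 _ hxX) (hcert1 _ hxX)
  have hpos : 0 < v (x 0) * exp (β * (τ - 0)) := one_pos.trans_le ((hcert4 _ hxτ).trans hgrowth)
  exact pos_of_mul_pos_left hpos (exp_pos _).le

theorem outer_approximation_certificate
    {n m : ℕ} (f : EuclideanSpace ℝ (Fin n) → EuclideanSpace ℝ (Fin n))
    (G : EuclideanSpace ℝ (Fin n) → Fin m → EuclideanSpace ℝ (Fin n))
    (ub : ℝ) (hub : 0 ≤ ub)
    (X XT : Set (EuclideanSpace ℝ (Fin n))) (hXT : XT ⊆ X)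
    (v : EuclideanSpace ℝ (Fin n) → ℝ) (p : Fin m → EuclideanSpace ℝ (Fin n) → ℝ)
    (β : ℝ) (hβ : 0 < β)
    (hv : ContDiff ℝ 1 v) (hp : ∀ i, Continuous (p i))
    (hcert1 : ∀ y ∈ X, fderiv ℝ v y (f y) + ub * ∑ i, p i y ≤ β * v y)
    (hcert2 : ∀ y ∈ X, ∀ i, fderiv ℝ v y (G y i) ≤ p i y)
    (hcert3 : ∀ y ∈ X, ∀ i, 0 ≤ p i y)
    (hcert4 : ∀ y ∈ XT, 1 ≤ v y) :
    ROA f G ub X XT ⊆ {y | 0 < v y} :=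
  outer_approximation_certificate_general f G ub X XT v p β hv hcert1 hcert2 hcert3 hcert4
end

section
/- Let β > 0. Suppose v ∈ C¹ and w ∈ C⁰ satisfy: ∇v(x)·f̄(x) ≤ β v(x) for all x ∈ X_T^c, v(x) ≥ 0 for x ∈ X_∂, where X_T^c = {x : g_X(x) ≥ 0, g_T(x) ≤ 0} is compact and X_∂ = {x : g_X(x) = 0}. Then every x₀ ∈ X with v(x₀) < 0 belongs to the region of attraction X₀ of the system ẋ = f̄(x): i.e., the trajectory from x₀ stays in X = {g_X > 0} and reaches X_T = {g_T > 0} in finite time. Equivalently, {x ∈ X : v(x) < 0} ⊆ X₀. -/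
open Set Real Filter Topology

/-!
By Grönwall, `v (x t) ≤ e^{βt} v (x₀) < 0` as long as the trajectory stays in the compact set
`K = {gX ≥ 0, gT ≤ 0}`. Since `v` is bounded below on `K` and `e^{βt} v (x₀) → -∞`, the trajectory
must leave `K`. Up to its first exit time it cannot touch `{gX = 0}`, where `v ≥ 0`, so `gX > 0`
there and, by continuity, slightly beyond; the exit therefore happens through `{gT > 0}`.
-/

theorem image_le_mul_exp_of_deriv_right_le_mul {φ φ' : ℝ → ℝ} {β a b : ℝ}
    (hφ : ContinuousOn φ (Icc a b))
    (hφ' : ∀ t ∈ Ico a b, HasDerivWithinAt φ (φ' t) (Ici t) t)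
    (bound : ∀ t ∈ Ico a b, φ' t ≤ β * φ t) :
    ∀ t ∈ Icc a b, φ t ≤ φ a * exp (β * (t - a)) := by
  intro t ht
  simpa only [gronwallBound_ε0] using
    le_gronwallBound_of_liminf_deriv_right_le hφ
      (fun s hs _ hr => (hφ' s hs).liminf_right_slope_le hr) le_rfl
      (fun s hs => (bound s hs).trans_eq (add_zero _).symm) t ht

section Trajectory

variable {E : Type*} {K : Set E} {γ : ℝ → E} {v : E → ℝ} {β : ℝ}

theorem le_mul_exp_along_of_mapsTo_Icc [NormedAddCommGroup E] [NormedSpace ℝ E] {f : E → E}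
    (hv : Differentiable ℝ v) (hγ : ∀ t, 0 ≤ t → HasDerivAt γ (f (γ t)) t)
    (hcert : ∀ y ∈ K, fderiv ℝ v y (f y) ≤ β * v y) {t : ℝ} (ht : 0 ≤ t)
    (hK : MapsTo γ (Icc 0 t) K) :
    v (γ t) ≤ v (γ 0) * exp (β * t) := by
  have hderiv : ∀ s ∈ Icc 0 t, HasDerivAt (v ∘ γ) (fderiv ℝ v (γ s) (f (γ s))) s :=
    fun s hs => (hv (γ s)).hasFDerivAt.comp_hasDerivAt s (hγ s hs.1)
  simpa only [sub_zero, Function.comp_apply] using image_le_mul_exp_of_deriv_right_le_mul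
    (fun s hs => (hderiv s hs).continuousAt.continuousWithinAt)
    (fun s hs => (hderiv s (Ico_subset_Icc_self hs)).hasDerivWithinAt)
    (fun s hs => hcert _ (hK (Ico_subset_Icc_self hs))) t ⟨ht, le_rfl⟩

variable [TopologicalSpace E]

theorem exists_notMem_of_le_mul_exp (hK : IsCompact K) (hv : ContinuousOn v K) (hβ : 0 < β)
    (hv₀ : v (γ 0) < 0)
    (hbound : ∀ t, 0 ≤ t → MapsTo γ (Icc 0 t) K → v (γ t) ≤ v (γ 0) * exp (β * t)) :
    ∃ t, 0 ≤ t ∧ γ t ∉ K := by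
  obtain ⟨m, hm⟩ := hK.bddBelow_image hv
  have hdiverge : Tendsto (fun t => v (γ 0) * exp (β * t)) atTop atBot :=
    (tendsto_exp_atTop.comp (tendsto_id.const_mul_atTop hβ)).const_mul_atTop_of_neg hv₀
  obtain ⟨t, hlt, ht⟩ := ((hdiverge.eventually_lt_atBot m).and (eventually_ge_atTop 0)).exists
  by_contra! hstay
  exact (hbound t ht fun s hs => hstay s hs.1).not_gt
    (hlt.trans_le (hm (mem_image_of_mem v (hstay t ht))))

theorem exists_first_exit_time (hK : IsClosed K) (hγ : ContinuousOn γ (Ici 0)) (h₀ : γ 0 ∈ K)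
    (hexit : ∃ t, 0 ≤ t ∧ γ t ∉ K) :
    ∃ τ, 0 ≤ τ ∧ MapsTo γ (Icc 0 τ) K ∧ ∃ᶠ t in 𝓝[>] τ, γ t ∉ K := by
  set S := {t | 0 ≤ t ∧ γ t ∉ K}
  have hS : BddBelow S := ⟨0, fun _ ht => ht.1⟩
  set τ := sInf S
  have hτ : 0 ≤ τ := le_csInf hexit fun _ ht => ht.1
  have hbefore : MapsTo γ (Ico 0 τ) K := fun s hs => by
    by_contra h
    exact (csInf_le hS ⟨hs.1, h⟩).not_gt hs.2
  have hτK : γ τ ∈ K := by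
    rcases hτ.eq_or_lt with h | h
    · rwa [← h]
    · rw [← hK.closure_eq]
      exact ((hγ τ hτ).mono Ico_subset_Ici_self).mem_closure
        (by rw [closure_Ico h.ne]; exact right_mem_Icc.mpr hτ) hbefore
  refine ⟨τ, hτ, fun s hs => ?_, ?_⟩
  · rcases hs.2.lt_or_eq with h | h
    · exact hbefore ⟨hs.1, h⟩
    · rwa [h]
  · refine frequently_iff.mpr fun hU => ?_
    obtain ⟨u, hτu, hUu⟩ := mem_nhdsGT_iff_exists_Ioo_subset.mp hU
    obtain ⟨t, ⟨ht, hγt⟩, htu⟩ := exists_lt_of_csInf_lt hexit hτu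
    have hτt : τ < t := (csInf_le hS ⟨ht, hγt⟩).lt_of_ne (by rintro rfl; exact hγt hτK)
    exact ⟨t, hUu ⟨hτt, htu⟩, hγt⟩

theorem exists_notMem_mapsTo_Icc_of_frequently_notMem {U : Set E} {τ : ℝ} (hU : IsOpen U)
    (hγ : ContinuousAt γ τ) (hτ : 0 ≤ τ) (hτU : MapsTo γ (Icc 0 τ) U)
    (hexit : ∃ᶠ t in 𝓝[>] τ, γ t ∉ K) :
    ∃ t, τ < t ∧ γ t ∉ K ∧ MapsTo γ (Icc 0 t) U := by
  obtain ⟨l, u, hτlu, hlu⟩ := mem_nhds_iff_exists_Ioo_subset.mp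
    (hγ.preimage_mem_nhds (hU.mem_nhds (hτU ⟨hτ, le_rfl⟩)))
  obtain ⟨t, hnot, htu⟩ := (hexit.and_eventually (Ioo_mem_nhdsGT hτlu.2)).exists
  refine ⟨t, htu.1, hnot, fun s hs => ?_⟩
  rcases le_or_gt s τ with h | h
  · exact hτU ⟨hs.1, h⟩
  · exact hlu ⟨hτlu.1.trans h, hs.2.trans_lt htu.2⟩

end Trajectory

theorem inner_approximation_certificate_general
    {n : ℕ} (fbar : EuclideanSpace ℝ (Fin n) → EuclideanSpace ℝ (Fin n))
    (gX gT : EuclideanSpace ℝ (Fin n) → ℝ)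
    (hgX : Continuous gX)
    (hcpt : IsCompact {y | 0 ≤ gX y ∧ gT y ≤ 0})
    (v : EuclideanSpace ℝ (Fin n) → ℝ) (hv : ContDiff ℝ 1 v)
    (β : ℝ) (hβ : 0 < β)
    (hcert1 : ∀ y, 0 ≤ gX y → gT y ≤ 0 → fderiv ℝ v y (fbar y) ≤ β * v y)
    (hcert2 : ∀ y, gX y = 0 → 0 ≤ v y)
    -- the flow: a global forward solution from each initial condition
    (x : EuclideanSpace ℝ (Fin n) → ℝ → EuclideanSpace ℝ (Fin n))
    (hflow0 : ∀ x₀, x x₀ 0 = x₀)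
    (hflow : ∀ x₀, ∀ t : ℝ, 0 ≤ t → HasDerivAt (x x₀) (fbar (x x₀ t)) t) :
    ∀ x₀, 0 < gX x₀ → v x₀ < 0 →
      ∃ τ : ℝ, 0 ≤ τ ∧ 0 < gT (x x₀ τ) ∧ ∀ t ∈ Icc (0:ℝ) τ, 0 < gX (x x₀ t) := by
  intro x₀ hX₀ hv₀
  by_cases hT₀ : 0 < gT x₀
  · refine ⟨0, le_rfl, by rwa [hflow0], fun t ht => ?_⟩
    rwa [le_antisymm ht.2 ht.1, hflow0]
  rw [← hflow0 x₀] at hX₀ hv₀ hT₀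
  have hbound : ∀ t, 0 ≤ t → MapsTo (x x₀) (Icc 0 t) {y | 0 ≤ gX y ∧ gT y ≤ 0} →
      v (x x₀ t) ≤ v (x x₀ 0) * exp (β * t) := fun _ ht hK =>
    le_mul_exp_along_of_mapsTo_Icc (hv.differentiable one_ne_zero) (hflow x₀)
      (fun y hy => hcert1 y hy.1 hy.2) ht hK
  obtain ⟨τ, hτ, hKτ, hexit⟩ := exists_first_exit_time hcpt.isClosed
    (fun t ht => (hflow x₀ t ht).continuousAt.continuousWithinAt) ⟨hX₀.le, not_lt.mp hT₀⟩
    (exists_notMem_of_le_mul_exp hcpt hv.continuous.continuousOn hβ hv₀ hbound)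
  have hXτ : MapsTo (x x₀) (Icc 0 τ) {y | 0 < gX y} := fun s hs =>
    (hKτ hs).1.lt_of_ne' fun h => (hcert2 _ h).not_gt <|
      (hbound s hs.1 (hKτ.mono_left (Icc_subset_Icc_right hs.2))).trans_lt
        (mul_neg_of_neg_of_pos hv₀ (exp_pos _))
  obtain ⟨t, hτt, hnotK, hXt⟩ := exists_notMem_mapsTo_Icc_of_frequently_notMem
    (isOpen_lt continuous_const hgX) (hflow x₀ τ hτ).continuousAt hτ hXτ hexit
  have hgXt : 0 < gX (x x₀ t) := hXt ⟨hτ.trans hτt.le, le_rfl⟩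
  exact ⟨t, hτ.trans hτt.le, not_le.mp fun h => hnotK ⟨hgXt.le, h⟩, fun _ hs => hXt hs⟩

theorem inner_approximation_certificate
    {n : ℕ} (fbar : EuclideanSpace ℝ (Fin n) → EuclideanSpace ℝ (Fin n))
    (gX gT : EuclideanSpace ℝ (Fin n) → ℝ)
    (hgX : Continuous gX) (hgT : Continuous gT)
    (hXTsub : {y | 0 < gT y} ⊆ {y | 0 < gX y})
    (hcpt : IsCompact {y | 0 ≤ gX y ∧ gT y ≤ 0})
    (v : EuclideanSpace ℝ (Fin n) → ℝ) (hv : ContDiff ℝ 1 v)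
    (β : ℝ) (hβ : 0 < β)
    (hcert1 : ∀ y, 0 ≤ gX y → gT y ≤ 0 → fderiv ℝ v y (fbar y) ≤ β * v y)
    (hcert2 : ∀ y, gX y = 0 → 0 ≤ v y)
    -- the flow: a global forward solution from each initial condition
    (x : EuclideanSpace ℝ (Fin n) → ℝ → EuclideanSpace ℝ (Fin n))
    (hflow0 : ∀ x₀, x x₀ 0 = x₀)
    (hflow : ∀ x₀, ∀ t : ℝ, 0 ≤ t → HasDerivAt (x x₀) (fbar (x x₀ t)) t) :
    ∀ x₀, 0 < gX x₀ → v x₀ < 0 →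
      ∃ τ : ℝ, 0 ≤ τ ∧ 0 < gT (x x₀ τ) ∧ ∀ t ∈ Icc (0:ℝ) τ, 0 < gX (x x₀ t) :=
  inner_approximation_certificate_general fbar gX gT hgX hcpt v hv β hβ hcert1 hcert2 x hflow0 hflow
end

section
/- Under the hypotheses of the inner-approximation certificate, if ∇v·f̄ ≤ βv on X_T^c, the trajectory x(t) from x₀ stays in X_T^c for all t ∈ [0,∞), and v is continuous on the compact set X_T^c, then v(x₀) ≥ 0. -/
open Set Real

theorem nonnegativity_if_trapped_forever
    {n : ℕ} (K : Set (EuclideanSpace ℝ (Fin n))) (hK : IsCompact K)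
    (fbar : EuclideanSpace ℝ (Fin n) → EuclideanSpace ℝ (Fin n))
    (v : EuclideanSpace ℝ (Fin n) → ℝ) (hv : ContDiff ℝ 1 v)
    (β : ℝ) (hβ : 0 < β)
    (hcert : ∀ y ∈ K, fderiv ℝ v y (fbar y) ≤ β * v y)
    (x : ℝ → EuclideanSpace ℝ (Fin n))
    (hode : ∀ t : ℝ, 0 ≤ t → HasDerivAt x (fbar (x t)) t)
    (hK' : ∀ t : ℝ, 0 ≤ t → x t ∈ K) :
    0 ≤ v (x 0) := by
  -- bound on |v| over K
  obtain ⟨M, hM⟩ := hK.exists_bound_of_continuousOn (hv.continuous.continuousOn (s := K))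
  set h : ℝ → ℝ := fun t => Real.exp (-β * t) * v (x t) with hh
  have hderiv : ∀ t : ℝ, 0 ≤ t → HasDerivAt h
      (Real.exp (-β * t) * (fderiv ℝ v (x t) (fbar (x t)) - β * v (x t))) t := by
    intro t ht
    have hx := hode t ht
    have hvf : HasFDerivAt v (fderiv ℝ v (x t)) (x t) :=
      (hv.differentiable one_ne_zero (x t)).hasFDerivAt
    have hg : HasDerivAt (fun s => v (x s)) (fderiv ℝ v (x t) (fbar (x t))) t :=
      hvf.comp_hasDerivAt t hx
    have he : HasDerivAt (fun s => Real.exp (-β * s)) (-β * Real.exp (-β * t)) t := by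
      have := (hasDerivAt_id t).const_mul (-β)
      have := (Real.hasDerivAt_exp (-β * t)).comp t this
      simpa [Function.comp_def, mul_comm] using this
    have := he.mul hg
    exact this.congr_deriv (by ring)
  have hanti : AntitoneOn h (Ici (0:ℝ)) := by
    apply antitoneOn_of_deriv_nonpos (convex_Ici 0)
    · exact fun t ht => ((hderiv t ht).continuousAt).continuousWithinAt
    · intro t ht
      rw [interior_Ici] at ht
      exact (hderiv t (le_of_lt ht)).differentiableAt.differentiableWithinAt
    · intro t ht
      rw [interior_Ici] at ht
      rw [(hderiv t ht.le).deriv]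
      have h1 : fderiv ℝ v (x t) (fbar (x t)) - β * v (x t) ≤ 0 :=
        sub_nonpos.2 (hcert _ (hK' t ht.le))
      exact mul_nonpos_of_nonneg_of_nonpos (Real.exp_nonneg _) h1
  have hbound : ∀ t : ℝ, 0 ≤ t → -(Real.exp (-β * t) * M) ≤ v (x 0) := by
    intro t ht
    have h1 : h t ≤ h 0 := hanti (mem_Ici.2 le_rfl) (mem_Ici.2 ht) ht
    have h2 : -(Real.exp (-β * t) * M) ≤ h t := by
      have := hM (x t) (hK' t ht)
      have := neg_le_of_abs_le (by simpa using this)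
      calc -(Real.exp (-β * t) * M) = Real.exp (-β * t) * (-M) := by ring
        _ ≤ Real.exp (-β * t) * v (x t) :=
          mul_le_mul_of_nonneg_left this (Real.exp_nonneg _)
    simpa [hh] using h2.trans h1
  have htend : Filter.Tendsto (fun t : ℝ => -(Real.exp (-β * t) * M)) Filter.atTop (nhds 0) := by
    have : Filter.Tendsto (fun t : ℝ => Real.exp (-β * t)) Filter.atTop (nhds 0) := by
      apply Real.tendsto_exp_atBot.comp
      have h1 : Filter.Tendsto (fun t : ℝ => β * t) Filter.atTop Filter.atTop :=
        Filter.Tendsto.const_mul_atTop hβ Filter.tendsto_id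
      have h2 := (Filter.tendsto_neg_atTop_atBot (G := ℝ)).comp h1
      simpa [Function.comp_def, ← neg_mul] using h2
    have := (this.mul_const M).neg
    simpa using this
  exact le_of_tendsto htend (Filter.eventually_atTop.2 ⟨0, fun t ht => hbound t ht⟩)
end

section
/- Let μ₀ be a finite nonnegative Borel measure on X ⊆ ℝⁿ, τ : X → [0,∞] a measurable stopping time, and for each x₀ let x(·|x₀) be the trajectory of ẋ = f̄(x) remaining in X on [0,τ(x₀)). Define the discounted occupation measure μ(A) = ∫_X ∫₀^{τ(x₀)} e^{-βt} 1_A(x(t|x₀)) dt dμ₀(x₀) and the discounted final measure μ_T(A) = ∫_X e^{-βτ(x₀)} 1_A(x(τ(x₀)|x₀)) dμ₀(x₀) (with e^{-β·∞} := 0). Then for every v ∈ C¹(X): ∫ v dμ_T + β ∫ v dμ = ∫ v dμ₀ + ∫ ∇v·f̄ dμ (the discounted Liouville equation). -/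
/-!
Along a trajectory the product rule gives
`d/dt [e^{-βt} v(x(t))] = e^{-βt} (∇v · f̄ - β v)(x(t))`, and integrating over `[0, τ(x₀))`
yields the equation for the Dirac initial measure at `x₀`. When `τ(x₀) = ∞` there is no
boundary term at infinity: `e^{-βt} v(x(t))` is integrable together with its derivative, hence
tends to `0`. Integrating this pointwise identity against `μ₀` gives the equation.
-/

open Set Real MeasureTheory ENNReal Filter

theorem setOf_nonneg_and_ofReal_lt_top : {t : ℝ | 0 ≤ t ∧ ENNReal.ofReal t < ⊤} = Ici 0 := by
  ext t
  simp [ENNReal.ofReal_lt_top]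

theorem setOf_nonneg_and_ofReal_lt_ofReal (T : ℝ) :
    {t : ℝ | 0 ≤ t ∧ ENNReal.ofReal t < ENNReal.ofReal T} = Ico 0 T := by
  ext t
  exact and_congr_right fun ht => ENNReal.ofReal_lt_ofReal_iff_of_nonneg ht

section HorizonFTC

variable {E : Type*} [NormedAddCommGroup E] [NormedSpace ℝ E] [CompleteSpace E] {f f' : ℝ → E}

theorem integral_Ico_eq_sub_of_hasDerivAt {a b : ℝ} (hab : a ≤ b)
    (hderiv : ∀ t ∈ Icc a b, HasDerivAt f (f' t) t) (hf' : IntegrableOn f' (Ico a b)) :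
    ∫ t in Ico a b, f' t = f b - f a := by
  rw [integral_Ico_eq_integral_Ioc, ← intervalIntegral.integral_of_le hab]
  refine intervalIntegral.integral_eq_sub_of_hasDerivAt (fun t ht => hderiv t ?_) ?_
  · rwa [uIcc_of_le hab] at ht
  · rwa [intervalIntegrable_iff_integrableOn_Ioc_of_le hab, integrableOn_Ioc_iff_integrableOn_Ioo,
      ← integrableOn_Ico_iff_integrableOn_Ioo]

theorem integral_Ici_eq_neg_of_hasDerivAt {a : ℝ} (hderiv : ∀ t ∈ Ici a, HasDerivAt f (f' t) t)
    (hf : IntegrableOn f (Ici a)) (hf' : IntegrableOn f' (Ici a)) :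
    ∫ t in Ici a, f' t = -f a := by
  have hf'_Ioi := hf'.mono_set Ioi_subset_Ici_self
  have hlim : Tendsto f atTop (nhds 0) :=
    tendsto_zero_of_hasDerivAt_of_integrableOn_Ioi (fun t ht => hderiv t (mem_Ici_of_Ioi ht))
      hf'_Ioi (hf.mono_set Ioi_subset_Ici_self)
  rw [integral_Ici_eq_integral_Ioi, integral_Ioi_of_hasDerivAt_of_tendsto' hderiv hf'_Ioi hlim,
    zero_sub]

theorem integral_setOf_nonneg_and_ofReal_lt_eq_sub {τ : ℝ≥0∞}
    (hderiv : ∀ t, 0 ≤ t → ENNReal.ofReal t ≤ τ → HasDerivAt f (f' t) t)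
    (hf : IntegrableOn f {t | 0 ≤ t ∧ ENNReal.ofReal t < τ})
    (hf' : IntegrableOn f' {t | 0 ≤ t ∧ ENNReal.ofReal t < τ}) :
    ∫ t in {t | 0 ≤ t ∧ ENNReal.ofReal t < τ}, f' t = (if τ = ⊤ then 0 else f τ.toReal) - f 0 := by
  rcases eq_or_ne τ ⊤ with rfl | hτ
  · rw [setOf_nonneg_and_ofReal_lt_top] at hf hf' ⊢
    rw [if_pos rfl, zero_sub]
    exact integral_Ici_eq_neg_of_hasDerivAt (fun t ht => hderiv t ht le_top) hf hf'
  · obtain ⟨T, hT, rfl⟩ : ∃ T, 0 ≤ T ∧ τ = ENNReal.ofReal T :=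
      ⟨τ.toReal, ENNReal.toReal_nonneg, (ENNReal.ofReal_toReal hτ).symm⟩
    rw [setOf_nonneg_and_ofReal_lt_ofReal] at hf' ⊢
    rw [if_neg hτ, ENNReal.toReal_ofReal hT]
    exact integral_Ico_eq_sub_of_hasDerivAt hT
      (fun t ht => hderiv t ht.1 (ENNReal.ofReal_le_ofReal ht.2)) hf'

end HorizonFTC

theorem hasDerivAt_exp_mul_comp {E : Type*} [NormedAddCommGroup E] [NormedSpace ℝ E]
    {v : E → ℝ} {γ : ℝ → E} {γ' : E} {t : ℝ} (β : ℝ) (hv : DifferentiableAt ℝ v (γ t))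
    (hγ : HasDerivAt γ γ' t) :
    HasDerivAt (fun s => Real.exp (-β * s) * v (γ s))
      (Real.exp (-β * t) * fderiv ℝ v (γ t) γ' - β * (Real.exp (-β * t) * v (γ t))) t := by
  have hexp : HasDerivAt (fun s => Real.exp (-β * s)) (Real.exp (-β * t) * -β) t := by
    simpa using ((hasDerivAt_id t).const_mul (-β)).exp
  have hprod : HasDerivAt (fun s => Real.exp (-β * s) * v (γ s)) _ t :=
    hexp.mul (hv.hasFDerivAt.comp_hasDerivAt t hγ)
  convert hprod using 1
  ring

theorem discounted_liouville_trajectory {E : Type*} [NormedAddCommGroup E] [NormedSpace ℝ E]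
    {F : E → E} {γ : ℝ → E} {v : E → ℝ} {τ : ℝ≥0∞} (β : ℝ) (hv : Differentiable ℝ v)
    (hγ : ∀ t, 0 ≤ t → ENNReal.ofReal t ≤ τ → HasDerivAt γ (F (γ t)) t)
    (hint_v : IntegrableOn (fun t => Real.exp (-β * t) * v (γ t))
      {t : ℝ | 0 ≤ t ∧ ENNReal.ofReal t < τ})
    (hint_dv : IntegrableOn (fun t => Real.exp (-β * t) * fderiv ℝ v (γ t) (F (γ t)))
      {t : ℝ | 0 ≤ t ∧ ENNReal.ofReal t < τ}) :
    (if τ = ⊤ then (0 : ℝ) else Real.exp (-β * τ.toReal) * v (γ τ.toReal))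
      + β * ∫ t in {t : ℝ | 0 ≤ t ∧ ENNReal.ofReal t < τ}, Real.exp (-β * t) * v (γ t)
    = v (γ 0) + ∫ t in {t : ℝ | 0 ≤ t ∧ ENNReal.ofReal t < τ},
        Real.exp (-β * t) * fderiv ℝ v (γ t) (F (γ t)) := by
  have hftc := integral_setOf_nonneg_and_ofReal_lt_eq_sub
    (fun t ht htτ => hasDerivAt_exp_mul_comp β (hv (γ t)) (hγ t ht htτ))
    hint_v (hint_dv.sub (hint_v.const_mul β))
  rw [integral_sub hint_dv (hint_v.const_mul β), integral_const_mul] at hftc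
  simp only [mul_zero, Real.exp_zero, one_mul] at hftc
  linarith

theorem discounted_liouville_general
    {n : ℕ} (X : Set (EuclideanSpace ℝ (Fin n)))
    (fbar : EuclideanSpace ℝ (Fin n) → EuclideanSpace ℝ (Fin n))
    (β : ℝ)
    (μ₀ : Measure (EuclideanSpace ℝ (Fin n)))
    (hμ₀X : μ₀ Xᶜ = 0)
    (τ : EuclideanSpace ℝ (Fin n) → ℝ≥0∞)
    (x : EuclideanSpace ℝ (Fin n) → ℝ → EuclideanSpace ℝ (Fin n))
    (hx0 : ∀ x₀, x x₀ 0 = x₀)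
    (hode : ∀ x₀, ∀ t : ℝ, 0 ≤ t → ENNReal.ofReal t ≤ τ x₀ →
      HasDerivAt (x x₀) (fbar (x x₀ t)) t)
    (v : EuclideanSpace ℝ (Fin n) → ℝ) (hv : ContDiff ℝ 1 v)
    -- integrability assumptions making all the integrals below well defined
    (hint1 : Integrable (fun x₀ =>
      ∫ t in {t : ℝ | 0 ≤ t ∧ ENNReal.ofReal t < τ x₀},
        Real.exp (-β * t) * v (x x₀ t)) μ₀)
    (hint2 : Integrable (fun x₀ =>
      ∫ t in {t : ℝ | 0 ≤ t ∧ ENNReal.ofReal t < τ x₀},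
        Real.exp (-β * t) * fderiv ℝ v (x x₀ t) (fbar (x x₀ t))) μ₀)
    (hint3 : ∀ x₀ ∈ X, IntegrableOn (fun t =>
        Real.exp (-β * t) * v (x x₀ t)) {t : ℝ | 0 ≤ t ∧ ENNReal.ofReal t < τ x₀})
    (hint4 : ∀ x₀ ∈ X, IntegrableOn (fun t =>
        Real.exp (-β * t) * fderiv ℝ v (x x₀ t) (fbar (x x₀ t)))
        {t : ℝ | 0 ≤ t ∧ ENNReal.ofReal t < τ x₀})
    (hint5 : Integrable (fun x₀ =>
      if τ x₀ = ⊤ then (0:ℝ)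
      else Real.exp (-β * (τ x₀).toReal) * v (x x₀ (τ x₀).toReal)) μ₀)
    (hint6 : Integrable v μ₀) :
    (∫ x₀, (if τ x₀ = ⊤ then (0:ℝ)
        else Real.exp (-β * (τ x₀).toReal) * v (x x₀ (τ x₀).toReal)) ∂μ₀)
    + β * ∫ x₀, (∫ t in {t : ℝ | 0 ≤ t ∧ ENNReal.ofReal t < τ x₀},
        Real.exp (-β * t) * v (x x₀ t)) ∂μ₀
    = (∫ x₀, v x₀ ∂μ₀)
    + ∫ x₀, (∫ t in {t : ℝ | 0 ≤ t ∧ ENNReal.ofReal t < τ x₀},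
        Real.exp (-β * t) * fderiv ℝ v (x x₀ t) (fbar (x x₀ t))) ∂μ₀ := by
  have hX : ∀ᵐ x₀ ∂μ₀, x₀ ∈ X := mem_ae_iff.mpr hμ₀X
  rw [← integral_const_mul, ← integral_add hint5 (hint1.const_mul β), ← integral_add hint6 hint2]
  refine integral_congr_ae (hX.mono fun x₀ hx₀ => ?_)
  have hpoint := discounted_liouville_trajectory β (hv.differentiable one_ne_zero) (hode x₀)
    (hint3 x₀ hx₀) (hint4 x₀ hx₀)
  rwa [hx0] at hpoint

/-- The discounted Liouville equation (equation (8) of the paper), with the discounted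
occupation measure and discounted final measure unfolded into iterated integrals
against the initial measure `μ₀`.  The stopping time `τ` takes values in `[0,∞]`,
and `e^{-β·∞} := 0`. -/
theorem discounted_liouville
    {n : ℕ} (X : Set (EuclideanSpace ℝ (Fin n)))
    (fbar : EuclideanSpace ℝ (Fin n) → EuclideanSpace ℝ (Fin n))
    (β : ℝ) (hβ : 0 < β)
    (μ₀ : Measure (EuclideanSpace ℝ (Fin n))) [IsFiniteMeasure μ₀]
    (hμ₀X : μ₀ Xᶜ = 0)
    (τ : EuclideanSpace ℝ (Fin n) → ℝ≥0∞) (hτ : Measurable τ)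
    (x : EuclideanSpace ℝ (Fin n) → ℝ → EuclideanSpace ℝ (Fin n))
    (hx0 : ∀ x₀, x x₀ 0 = x₀)
    (hode : ∀ x₀, ∀ t : ℝ, 0 ≤ t → ENNReal.ofReal t ≤ τ x₀ →
      HasDerivAt (x x₀) (fbar (x x₀ t)) t)
    (hXtraj : ∀ x₀ ∈ X, ∀ t : ℝ, 0 ≤ t → ENNReal.ofReal t ≤ τ x₀ → x x₀ t ∈ X)
    (v : EuclideanSpace ℝ (Fin n) → ℝ) (hv : ContDiff ℝ 1 v)
    -- integrability assumptions making all the integrals below well defined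
    (hint1 : Integrable (fun x₀ =>
      ∫ t in {t : ℝ | 0 ≤ t ∧ ENNReal.ofReal t < τ x₀},
        Real.exp (-β * t) * v (x x₀ t)) μ₀)
    (hint2 : Integrable (fun x₀ =>
      ∫ t in {t : ℝ | 0 ≤ t ∧ ENNReal.ofReal t < τ x₀},
        Real.exp (-β * t) * fderiv ℝ v (x x₀ t) (fbar (x x₀ t))) μ₀)
    (hint3 : ∀ x₀ ∈ X, IntegrableOn (fun t =>
        Real.exp (-β * t) * v (x x₀ t)) {t : ℝ | 0 ≤ t ∧ ENNReal.ofReal t < τ x₀})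
    (hint4 : ∀ x₀ ∈ X, IntegrableOn (fun t =>
        Real.exp (-β * t) * fderiv ℝ v (x x₀ t) (fbar (x x₀ t)))
        {t : ℝ | 0 ≤ t ∧ ENNReal.ofReal t < τ x₀})
    (hint5 : Integrable (fun x₀ =>
      if τ x₀ = ⊤ then (0:ℝ)
      else Real.exp (-β * (τ x₀).toReal) * v (x x₀ (τ x₀).toReal)) μ₀)
    (hint6 : Integrable v μ₀) :
    (∫ x₀, (if τ x₀ = ⊤ then (0:ℝ)
        else Real.exp (-β * (τ x₀).toReal) * v (x x₀ (τ x₀).toReal)) ∂μ₀)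
    + β * ∫ x₀, (∫ t in {t : ℝ | 0 ≤ t ∧ ENNReal.ofReal t < τ x₀},
        Real.exp (-β * t) * v (x x₀ t)) ∂μ₀
    = (∫ x₀, v x₀ ∂μ₀)
    + ∫ x₀, (∫ t in {t : ℝ | 0 ≤ t ∧ ENNReal.ofReal t < τ x₀},
        Real.exp (-β * t) * fderiv ℝ v (x x₀ t) (fbar (x x₀ t))) ∂μ₀ :=
  discounted_liouville_general X fbar β μ₀ hμ₀X τ x hx0 hode v hv hint1 hint2 hint3 hint4 hint5
    hint6
end
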